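/- Let d be a square-free integer, d ≠ 0, 1, with d ≡ 1 (mod 4). Then ℤ[√d] is a TAF-domain if and only if d ≡ 5 (mod 8). -/

import Mathlib

/-!
For `a ∣ d - b²` the ideal `(a, b + √d)` is `{z | a ∣ z.re - b z.im}`, and `z ↦ z.re - b z.im` is
multiplicative modulo `d - b²`. Every nonzero ideal of `ℤ√d` is `(c) (a, b + √d)` for such `a, b`.

If `d ≡ 5 (mod 8)`, the factor `(c)` is a product of ideals `(p)` with `p` prime: `(p)` is prime if
`d` is not a square modulo `p`, it is `(p, b + √d) (p, -b + √d)` if `p` is odd and `p ∣ d - b²`, and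
`(2)` is primary to the prime `M = (2, 1 + √d)` with `M² ⊆ (2)`, hence 2-absorbing. The factor
`(a, b + √d)` splits along a coprime factorisation of `a`. For odd `p`,
`(p^k, b + √d) = (p, b + √d)^k`; since `8 ∤ d - b²`, the only powers of `2` that occur give
`(2, b + √d)`, which is prime, and `(4, b + √d)`, which is 2-absorbing for the same reason as `(2)`.

If `d ≡ 1 (mod 8)`, the ideal `W = (8, 1 + √d)` is proper and not 2-absorbing (`2 · 2 · 2 ∈ W`,
`4 ∉ W`). Every proper ideal containing `W` lies in `M`, and `M² ⊆ (2)` does not contain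
`1 + √d ∈ W`, so `W` is not a product of two or more proper ideals either.
-/

/-- An ideal is 2-absorbing if whenever a product of three elements lies in it,
the product of some two of them lies in it. -/
def IsTwoAbsorbing {R : Type*} [CommRing R] (I : Ideal R) : Prop :=
  ∀ a b c : R, a * b * c ∈ I → a * b ∈ I ∨ a * c ∈ I ∨ b * c ∈ I

/-- A TAF-ring: every proper ideal is a finite product of proper 2-absorbing ideals. -/
def IsTAFRing (R : Type*) [CommRing R] : Prop :=
  ∀ I : Ideal R, I ≠ ⊤ → ∃ (n : ℕ) (J : Fin n → Ideal R),
    (∀ i, J i ≠ ⊤ ∧ IsTwoAbsorbing (J i)) ∧ I = ∏ i, J i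

section TwoAbsorbing

variable {R : Type*} [CommRing R]

theorem Ideal.IsPrime.isTwoAbsorbing {I : Ideal R} (hI : I.IsPrime) : IsTwoAbsorbing I :=
  fun a _ _ h => (hI.mem_or_mem h).imp id fun hc => Or.inl (I.mul_mem_left a hc)

theorem isTwoAbsorbing_of_sq_le {I P : Ideal R} (hP : P.IsPrime) (hPI : P ^ 2 ≤ I)
    (hI : ∀ x y, x * y ∈ I → x ∉ P → y ∈ I) : IsTwoAbsorbing I := by
  have hsq : ∀ {x y}, x ∈ P → y ∈ P → x * y ∈ I := fun hx hy =>
    hPI (by rw [sq]; exact Ideal.mul_mem_mul hx hy)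
  intro x y z h
  by_cases hx : x ∈ P
  · by_cases hy : y ∈ P
    · exact Or.inl (hsq hx hy)
    by_cases hz : z ∈ P
    · exact Or.inr (Or.inl (hsq hx hz))
    refine Or.inl (I.mul_mem_right y (hI (y * z) x ?_ (hP.mul_notMem hy hz)))
    convert h using 1; ring
  by_cases hy : y ∈ P
  · by_cases hz : z ∈ P
    · exact Or.inr (Or.inr (hsq hy hz))
    refine Or.inl (I.mul_mem_left x (hI (x * z) y ?_ (hP.mul_notMem hx hz)))
    convert h using 1; ring
  exact Or.inr (Or.inl (I.mul_mem_left x (hI (x * y) z h (hP.mul_notMem hx hy))))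

variable (R) in
def twoAbsorbingProducts : Submonoid (Ideal R) :=
  Submonoid.closure {J | J ≠ ⊤ ∧ IsTwoAbsorbing J}

theorem mem_twoAbsorbingProducts {J : Ideal R} (hJ : J ≠ ⊤) (h : IsTwoAbsorbing J) :
    J ∈ twoAbsorbingProducts R :=
  Submonoid.subset_closure ⟨hJ, h⟩

theorem Ideal.IsPrime.mem_twoAbsorbingProducts {I : Ideal R} (hI : I.IsPrime) :
    I ∈ twoAbsorbingProducts R :=
  _root_.mem_twoAbsorbingProducts hI.ne_top hI.isTwoAbsorbing

theorem isTAFRing_of_forall_mem (h : ∀ I : Ideal R, I ≠ ⊤ → I ∈ twoAbsorbingProducts R) :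
    IsTAFRing R := by
  intro I hI
  obtain ⟨l, hl, rfl⟩ := Submonoid.exists_list_of_mem_closure (h I hI)
  exact ⟨l.length, l.get, fun i => hl _ (l.get_mem i), by rw [← List.prod_ofFn, List.ofFn_get]⟩

theorem IsTAFRing.isTwoAbsorbing_of_forall_le {W M : Ideal R} (hR : IsTAFRing R) (hW : W ≠ ⊤)
    (hM : ∀ J : Ideal R, W ≤ J → J ≠ ⊤ → J ≤ M) (hWM : ¬W ≤ M ^ 2) : IsTwoAbsorbing W := by
  obtain ⟨n, J, hJ, rfl⟩ := hR W hW
  have hJM : ∀ i, J i ≤ M := fun i =>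
    hM _ (Ideal.prod_le_inf.trans (Finset.inf_le (Finset.mem_univ i))) (hJ i).1
  rcases n with _ | _ | n
  · simp [Ideal.one_eq_top] at hW
  · simpa using (hJ 0).2
  · refine absurd ?_ hWM
    rw [Fin.prod_univ_succ, Fin.prod_univ_succ, sq]
    exact Ideal.mul_mono (hJM 0) (Ideal.mul_le_left.trans (hJM 1))

end TwoAbsorbing

theorem Squarefree.ne_mul_self {M : Type*} [CommMonoid M] {x : M} (hx : Squarefree x)
    (hu : ¬IsUnit x) (n : M) : x ≠ n * n := by
  rintro rfl
  exact hu ((hx n dvd_rfl).mul (hx n dvd_rfl))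

namespace Zsqrtd

variable {d : ℤ}

theorem isDomain_of_ne_mul_self (hd : ∀ n : ℤ, d ≠ n * n) : IsDomain (ℤ√d) :=
  have : NoZeroDivisors (ℤ√d) := ⟨fun {z w} hzw => by
    have h := congrArg norm hzw
    rwa [norm_mul, norm_zero, mul_eq_zero, norm_eq_zero hd, norm_eq_zero hd] at h⟩
  NoZeroDivisors.to_isDomain _

theorem mem_span_intCast {c : ℤ} {z : ℤ√d} :
    z ∈ Ideal.span {(c : ℤ√d)} ↔ c ∣ z.re ∧ c ∣ z.im := by
  rw [Ideal.mem_span_singleton, intCast_dvd]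

theorem span_intCast_ne_top {c : ℤ} (hc : ¬IsUnit c) : Ideal.span {(c : ℤ√d)} ≠ ⊤ := by
  rw [Ne, Ideal.eq_top_iff_one, mem_span_intCast]
  exact fun h => hc (isUnit_of_dvd_one (by simpa using h.1))

theorem mem_span_intCast_of_mul_mem {p : ℤ} (hp : Prime p) {z w : ℤ√d} (hz : ¬p ∣ z.norm)
    (h : z * w ∈ Ideal.span {(p : ℤ√d)}) : w ∈ Ideal.span {(p : ℤ√d)} := by
  have hN : (z.norm : ℤ√d) * w ∈ Ideal.span {(p : ℤ√d)} := by
    rw [norm_eq_mul_conj, mul_right_comm]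
    exact Ideal.mul_mem_right _ _ h
  rw [mem_span_intCast, re_smul, im_smul] at hN
  rw [mem_span_intCast]
  exact ⟨(hp.dvd_or_dvd hN.1).resolve_left hz, (hp.dvd_or_dvd hN.2).resolve_left hz⟩

/-- The ideal `(a, b + √d)`. -/
def primitiveIdeal (d a b : ℤ) : Ideal (ℤ√d) :=
  Ideal.span {(a : ℤ√d), ⟨b, 1⟩}

theorem intCast_mem_primitiveIdeal (a b : ℤ) : (a : ℤ√d) ∈ primitiveIdeal d a b :=
  Ideal.subset_span (Set.mem_insert _ _)

theorem mk_mem_primitiveIdeal (a b : ℤ) : (⟨b, 1⟩ : ℤ√d) ∈ primitiveIdeal d a b :=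
  Ideal.subset_span (Set.mem_insert_of_mem _ rfl)

theorem mem_primitiveIdeal {a b : ℤ} (hab : a ∣ d - b ^ 2) {z : ℤ√d} :
    z ∈ primitiveIdeal d a b ↔ a ∣ z.re - b * z.im := by
  rw [primitiveIdeal, Ideal.mem_span_pair]
  constructor
  · rintro ⟨α, β, rfl⟩
    obtain ⟨k, hk⟩ := hab
    refine ⟨α.re - b * α.im + β.im * k, ?_⟩
    simp only [re_add, re_mul, im_add, im_mul, re_intCast, im_intCast]
    linear_combination β.im * hk
  · rintro ⟨t, ht⟩
    refine ⟨t, z.im, Zsqrtd.ext ?_ (by simp)⟩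
    simp only [re_add, re_mul, re_intCast, im_intCast]
    linear_combination -ht

theorem mul_mem_primitiveIdeal_iff {a b : ℤ} (hab : a ∣ d - b ^ 2) {z w : ℤ√d} :
    z * w ∈ primitiveIdeal d a b ↔ a ∣ (z.re - b * z.im) * (w.re - b * w.im) := by
  have h : (z * w).re - b * (z * w).im
      = (z.re - b * z.im) * (w.re - b * w.im) + z.im * w.im * (d - b ^ 2) := by
    simp only [re_mul, im_mul]; ring
  rw [mem_primitiveIdeal hab, h, dvd_add_left (hab.mul_left _)]

theorem primitiveIdeal_eq_top_iff {a b : ℤ} (hab : a ∣ d - b ^ 2) :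
    primitiveIdeal d a b = ⊤ ↔ IsUnit a := by
  simp [Ideal.eq_top_iff_one, mem_primitiveIdeal hab, isUnit_iff_dvd_one]

theorem primitiveIdeal_isPrime {p b : ℤ} (hp : Prime p) (hb : p ∣ d - b ^ 2) :
    (primitiveIdeal d p b).IsPrime where
  ne_top' := (primitiveIdeal_eq_top_iff hb).not.mpr hp.not_isUnit
  mem_or_mem' h := by
    rw [mul_mem_primitiveIdeal_iff hb] at h
    simpa only [mem_primitiveIdeal hb] using hp.dvd_or_dvd h

theorem primitiveIdeal_mul_le {m n b : ℤ} (h : m * n ∣ d - b ^ 2) :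
    primitiveIdeal d m b * primitiveIdeal d n b ≤ primitiveIdeal d (m * n) b := by
  rw [Ideal.mul_le]
  intro z hz w hw
  rw [mem_primitiveIdeal (dvd_of_mul_right_dvd h)] at hz
  rw [mem_primitiveIdeal (dvd_of_mul_left_dvd h)] at hw
  rw [mul_mem_primitiveIdeal_iff h]
  exact mul_dvd_mul hz hw

theorem primitiveIdeal_mul {m n b : ℤ} (h : m * n ∣ d - b ^ 2)
    (hmn : ∃ u v w : ℤ, u * m + v * n + w * (2 * b) = 1) :
    primitiveIdeal d m b * primitiveIdeal d n b = primitiveIdeal d (m * n) b := by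
  refine _root_.le_antisymm (primitiveIdeal_mul_le h) ?_
  obtain ⟨u, v, w, huvw⟩ := hmn
  obtain ⟨k, hk⟩ := h
  have hm := intCast_mem_primitiveIdeal (d := d) m b
  have hn := intCast_mem_primitiveIdeal (d := d) n b
  have hxm := mk_mem_primitiveIdeal (d := d) m b
  have hxn := mk_mem_primitiveIdeal (d := d) n b
  -- `(b + √d)² - (d - b²) = 2b (b + √d)`
  have hx : (⟨b, 1⟩ : ℤ√d) = u * (m * ⟨b, 1⟩) + v * (⟨b, 1⟩ * n)
      + w * (⟨b, 1⟩ * ⟨b, 1⟩ - k * (m * n)) := by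
    ext
    · simp only [re_add, re_sub, re_mul, im_sub, im_mul, re_intCast, im_intCast]
      linear_combination (-b) * huvw - w * hk
    · simp only [re_sub, re_mul, im_add, im_sub, im_mul, re_intCast, im_intCast]
      linear_combination -huvw
  rw [primitiveIdeal, Ideal.span_le, Set.insert_subset_iff, Set.singleton_subset_iff,
    Int.cast_mul, hx]
  refine ⟨Ideal.mul_mem_mul hm hn, Ideal.add_mem _ (Ideal.add_mem _ ?_ ?_) ?_⟩
  · exact Ideal.mul_mem_left _ _ (Ideal.mul_mem_mul hm hxn)
  · exact Ideal.mul_mem_left _ _ (Ideal.mul_mem_mul hxm hn)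
  · exact Ideal.mul_mem_left _ _ (Ideal.sub_mem _ (Ideal.mul_mem_mul hxm hxn)
      (Ideal.mul_mem_left _ _ (Ideal.mul_mem_mul hm hn)))

theorem isTwoAbsorbing_primitiveIdeal_sq {p b : ℤ} (hp : Prime p) (hb : p ^ 2 ∣ d - b ^ 2) :
    IsTwoAbsorbing (primitiveIdeal d (p ^ 2) b) := by
  have hb' : p ∣ d - b ^ 2 := (dvd_pow_self p two_ne_zero).trans hb
  refine isTwoAbsorbing_of_sq_le (primitiveIdeal_isPrime hp hb') ?_ fun z w hzw hz => ?_
  · rw [sq, sq]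
    exact primitiveIdeal_mul_le (by rwa [← sq])
  · rw [mul_mem_primitiveIdeal_iff hb] at hzw
    rw [mem_primitiveIdeal hb'] at hz
    rw [mem_primitiveIdeal hb]
    exact (hp.coprime_iff_not_dvd.mpr hz).pow_left.dvd_of_dvd_mul_left hzw

theorem two_dvd_sub_one_sq (hd : Odd d) : (2 : ℤ) ∣ d - 1 ^ 2 := by
  simpa [← even_iff_two_dvd, Int.even_sub_one] using hd

theorem odd_norm_of_notMem_primitiveIdeal_two_one (hd : Odd d) {z : ℤ√d}
    (hz : z ∉ primitiveIdeal d 2 1) : Odd z.norm := by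
  rw [mem_primitiveIdeal (two_dvd_sub_one_sq hd), one_mul, ← even_iff_two_dvd,
    Int.not_even_iff_odd] at hz
  have hd' : ¬Even d := Int.not_even_iff_odd.mpr hd
  rw [norm_def]
  simpa [Int.odd_sub, Int.odd_mul, Int.even_mul, hd'] using hz

theorem primitiveIdeal_two_one_sq_le (hd : Odd d) :
    primitiveIdeal d 2 1 ^ 2 ≤ Ideal.span {((2 : ℤ) : ℤ√d)} := by
  rw [sq, Ideal.mul_le]
  intro z hz w hw
  rw [mem_primitiveIdeal (two_dvd_sub_one_sq hd), one_mul] at hz hw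
  obtain ⟨s, hs⟩ := hz
  obtain ⟨t, ht⟩ := hw
  obtain ⟨e, rfl⟩ := hd
  rw [mem_span_intCast, re_mul, im_mul]
  exact ⟨⟨z.im * w.im * (e + 1) + s * w.im + z.im * t + 2 * s * t,
      by linear_combination w.re * hs + (z.im + 2 * s) * ht⟩,
    ⟨z.im * w.im + s * w.im + z.im * t, by linear_combination w.im * hs + z.im * ht⟩⟩

theorem isTwoAbsorbing_span_two (hd : Odd d) :
    IsTwoAbsorbing (Ideal.span {((2 : ℤ) : ℤ√d)}) := by
  refine isTwoAbsorbing_of_sq_le (primitiveIdeal_isPrime Int.prime_two (two_dvd_sub_one_sq hd))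
    (primitiveIdeal_two_one_sq_le hd) fun z w h hz => ?_
  refine mem_span_intCast_of_mul_mem Int.prime_two ?_ h
  rw [← even_iff_two_dvd, Int.not_even_iff_odd]
  exact odd_norm_of_notMem_primitiveIdeal_two_one hd hz

theorem mem_span_intCast_of_dvd_norm {p : ℤ} (hp : Prime p) (hd : ∀ b : ℤ, ¬p ∣ d - b ^ 2)
    {z : ℤ√d} (hz : p ∣ z.norm) : z ∈ Ideal.span {(p : ℤ√d)} := by
  rw [mem_span_intCast]
  by_cases him : p ∣ z.im
  · refine ⟨hp.dvd_of_dvd_pow (n := 2) ?_, him⟩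
    have h : z.re ^ 2 = z.norm + d * z.im * z.im := by rw [norm_def]; ring
    rw [h]
    exact dvd_add hz ((him.mul_left _).mul_right _)
  · exfalso
    -- if `v z.im ≡ 1 (mod p)` then `v z.re` is a square root of `d` modulo `p`
    obtain ⟨u, v, huv⟩ := hp.coprime_iff_not_dvd.mpr him
    refine hd (v * z.re) ?_
    have h : d - (v * z.re) ^ 2 = p * (d * u * (1 + v * z.im)) - v ^ 2 * z.norm := by
      rw [norm_def]; linear_combination (-(d * (1 + v * z.im))) * huv
    rw [h]
    exact dvd_sub (dvd_mul_right _ _) (hz.mul_left _)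

theorem span_intCast_isPrime {p : ℤ} (hp : Prime p) (hd : ∀ b : ℤ, ¬p ∣ d - b ^ 2) :
    (Ideal.span {(p : ℤ√d)}).IsPrime where
  ne_top' := span_intCast_ne_top hp.not_isUnit
  mem_or_mem' {z w} h := by
    by_cases hz : p ∣ z.norm
    · exact Or.inl (mem_span_intCast_of_dvd_norm hp hd hz)
    · exact Or.inr (mem_span_intCast_of_mul_mem hp hz h)

theorem exists_combination_eq_one {p n b : ℤ} (hsf : Squarefree d) (hp : Prime p)
    (hp2 : ¬p ∣ 2) (h : p * n ∣ d - b ^ 2) : ∃ u v w : ℤ, u * p + v * n + w * (2 * b) = 1 := by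
  by_cases hpb : p ∣ 2 * b
  · have hpb : p ∣ b := (hp.dvd_or_dvd hpb).resolve_left hp2
    have hpn : ¬p ∣ n := fun hpn => hp.not_isUnit <| hsf p <| by
      have h' : p * p ∣ d - b ^ 2 := (mul_dvd_mul_left p hpn).trans h
      simpa [sq] using dvd_add h' (mul_dvd_mul hpb hpb)
    obtain ⟨u, v, huv⟩ := hp.coprime_iff_not_dvd.mpr hpn
    exact ⟨u, v, 0, by linear_combination huv⟩
  · obtain ⟨u, w, huw⟩ := hp.coprime_iff_not_dvd.mpr hpb
    exact ⟨u, 0, w, by linear_combination huw⟩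

theorem span_intCast_eq_primitiveIdeal_mul {p b : ℤ} (hsf : Squarefree d) (hp : Prime p)
    (hp2 : ¬p ∣ 2) (hb : p ∣ d - b ^ 2) :
    Ideal.span {(p : ℤ√d)} = primitiveIdeal d p b * primitiveIdeal d p (-b) := by
  obtain ⟨k, hk⟩ := hb
  refine _root_.le_antisymm ?_ ?_
  · obtain ⟨u, v, w, huvw⟩ :=
      exists_combination_eq_one hsf hp hp2 (n := k) ⟨1, by rw [hk, mul_one]⟩
    have hm := intCast_mem_primitiveIdeal (d := d) p b
    have hm' := intCast_mem_primitiveIdeal (d := d) p (-b)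
    have hx := mk_mem_primitiveIdeal (d := d) p b
    have hx' := mk_mem_primitiveIdeal (d := d) p (-b)
    -- `(b + √d)(-b + √d) = p k` and `(b + √d) p - p (-b + √d) = 2 b p`
    have hp : (p : ℤ√d)
        = u * (p * p) + v * (⟨b, 1⟩ * ⟨-b, 1⟩) + w * (⟨b, 1⟩ * p - p * ⟨-b, 1⟩) := by
      ext
      · simp only [re_add, re_sub, re_mul, im_sub, im_mul, re_intCast, im_intCast]
        linear_combination (-p) * huvw - v * hk
      · simp
    rw [Ideal.span_le, Set.singleton_subset_iff, SetLike.mem_coe, hp]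
    refine Ideal.add_mem _ (Ideal.add_mem _ ?_ ?_) ?_
    · exact Ideal.mul_mem_left _ _ (Ideal.mul_mem_mul hm hm')
    · exact Ideal.mul_mem_left _ _ (Ideal.mul_mem_mul hx hx')
    · exact Ideal.mul_mem_left _ _
        (Ideal.sub_mem _ (Ideal.mul_mem_mul hx hm') (Ideal.mul_mem_mul hm hx'))
  · rw [Ideal.mul_le]
    intro z hz w hw
    obtain ⟨s, hs⟩ := (mem_primitiveIdeal ⟨k, hk⟩).mp hz
    obtain ⟨t, ht⟩ := (mem_primitiveIdeal ⟨k, by rw [neg_sq, hk]⟩).mp hw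
    rw [mem_span_intCast, re_mul, im_mul]
    exact ⟨⟨w.re * s + b * z.im * t + z.im * w.im * k, by
        linear_combination w.re * hs + (b * z.im) * ht + (z.im * w.im) * hk⟩,
      ⟨w.im * s + z.im * t, by linear_combination w.im * hs + z.im * ht⟩⟩

theorem span_intCast_mem_twoAbsorbingProducts (hsf : Squarefree d) (hd : Odd d) {c : ℤ}
    (hc : c ≠ 0) : Ideal.span {(c : ℤ√d)} ∈ twoAbsorbingProducts (ℤ√d) := by
  induction c using UniqueFactorizationMonoid.induction_on_prime with
  | h₁ => exact absurd rfl hc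
  | h₂ u hu =>
    have hu' : IsUnit (u : ℤ√d) := hu.map (Int.castRingHom (ℤ√d))
    rw [Ideal.span_singleton_eq_top.mpr hu', ← Ideal.one_eq_top]
    exact one_mem _
  | h₃ a p ha hp ih =>
    rw [Int.cast_mul, ← Ideal.span_singleton_mul_span_singleton]
    refine mul_mem ?_ (ih (right_ne_zero_of_mul hc))
    by_cases hp2 : p ∣ 2
    · have hspan : Ideal.span {(p : ℤ√d)} = Ideal.span {((2 : ℤ) : ℤ√d)} := by
        rcases Int.associated_iff.mp (hp.associated_of_dvd Int.prime_two hp2) with rfl | rfl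
        · rfl
        · rw [Int.cast_neg, Ideal.span_singleton_neg]
      rw [hspan]
      exact mem_twoAbsorbingProducts (span_intCast_ne_top Int.prime_two.not_isUnit)
        (isTwoAbsorbing_span_two hd)
    by_cases hroot : ∃ b : ℤ, p ∣ d - b ^ 2
    · obtain ⟨b, hb⟩ := hroot
      rw [span_intCast_eq_primitiveIdeal_mul hsf hp hp2 hb]
      exact mul_mem (primitiveIdeal_isPrime hp hb).mem_twoAbsorbingProducts
        (primitiveIdeal_isPrime hp (by rwa [neg_sq])).mem_twoAbsorbingProducts
    · push Not at hroot
      exact (span_intCast_isPrime hp hroot).mem_twoAbsorbingProducts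

theorem primitiveIdeal_pow {p b : ℤ} (hsf : Squarefree d) (hp : Prime p) (hp2 : ¬p ∣ 2)
    {i : ℕ} (h : p ^ i ∣ d - b ^ 2) : primitiveIdeal d (p ^ i) b = primitiveIdeal d p b ^ i := by
  induction i with
  | zero => simp [(primitiveIdeal_eq_top_iff (one_dvd _)).mpr isUnit_one, Ideal.one_eq_top]
  | succ i ih =>
    rw [pow_succ' p] at h
    rw [pow_succ' p, pow_succ', ← primitiveIdeal_mul h (exists_combination_eq_one hsf hp hp2 h),
      ih (dvd_of_mul_left_dvd h)]

theorem not_eight_dvd_sub_sq (hd : d % 8 = 5) (b : ℤ) : ¬8 ∣ d - b ^ 2 := by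
  rw [Int.dvd_iff_emod_eq_zero, Int.sub_emod, sq, Int.mul_emod, hd]
  have h0 := Int.emod_nonneg b (by norm_num : (8 : ℤ) ≠ 0)
  have h8 := Int.emod_lt_of_pos b (by norm_num : (0 : ℤ) < 8)
  interval_cases b % 8 <;> decide

theorem primitiveIdeal_mem_twoAbsorbingProducts (hsf : Squarefree d) (hd : d % 8 = 5)
    {a b : ℤ} (hab : a ∣ d - b ^ 2) : primitiveIdeal d a b ∈ twoAbsorbingProducts (ℤ√d) := by
  have of_isUnit {a : ℤ} (hab : a ∣ d - b ^ 2) (ha : IsUnit a) :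
      primitiveIdeal d a b ∈ twoAbsorbingProducts (ℤ√d) := by
    rw [(primitiveIdeal_eq_top_iff hab).mpr ha, ← Ideal.one_eq_top]
    exact one_mem _
  induction a using UniqueFactorizationMonoid.induction_on_coprime with
  | h0 => exact absurd ((zero_dvd_iff.mp hab).symm ▸ dvd_zero 8) (not_eight_dvd_sub_sq hd b)
  | h1 hu => exact of_isUnit hab hu
  | @hpr p i hp =>
    rcases i with _ | i
    · exact of_isUnit hab (by simp)
    have hpb : p ∣ d - b ^ 2 := (dvd_pow_self p i.succ_ne_zero).trans hab
    by_cases hp2 : p ∣ 2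
    · match i, hab with
      | 0, _ => simpa using (primitiveIdeal_isPrime hp hpb).mem_twoAbsorbingProducts
      | 1, hab =>
        exact mem_twoAbsorbingProducts
          ((primitiveIdeal_eq_top_iff hab).not.mpr (by simpa using hp.not_isUnit))
          (isTwoAbsorbing_primitiveIdeal_sq hp hab)
      | i + 2, hab =>
        refine absurd ?_ (not_eight_dvd_sub_sq hd b)
        exact ((hp.associated_of_dvd Int.prime_two hp2).pow_pow (n := 3)).dvd_iff_dvd_left.mp
          ((pow_dvd_pow p (by omega)).trans hab)
    · rw [primitiveIdeal_pow hsf hp hp2 hab]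
      exact pow_mem (primitiveIdeal_isPrime hp hpb).mem_twoAbsorbingProducts _
  | hcp hxy hx hy =>
    obtain ⟨u, v, huv⟩ := hxy.isCoprime
    rw [← primitiveIdeal_mul hab ⟨u, v, 0, by linear_combination huv⟩]
    exact mul_mem (hx (dvd_of_mul_right_dvd hab)) (hy (dvd_of_mul_left_dvd hab))

theorem exists_intCast_mem_ne_zero (hd : ∀ n : ℤ, d ≠ n * n) {I : Ideal (ℤ√d)} (hI : I ≠ ⊥) :
    ∃ n : ℤ, n ≠ 0 ∧ (n : ℤ√d) ∈ I := by
  obtain ⟨z, hz, hz0⟩ := Submodule.exists_mem_ne_zero_of_ne_bot hI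
  refine ⟨z.norm, fun h => hz0 ((norm_eq_zero hd z).mp h), ?_⟩
  rw [norm_eq_mul_conj]
  exact I.mul_mem_right _ hz

def imIdeal (I : Ideal (ℤ√d)) : Ideal ℤ :=
  (I.restrictScalars ℤ).map (AddMonoidHom.mk' im im_add).toIntLinearMap

theorem mem_imIdeal {I : Ideal (ℤ√d)} {n : ℤ} : n ∈ imIdeal I ↔ ∃ z ∈ I, z.im = n :=
  Submodule.mem_map

theorem eq_span_mul_primitiveIdeal {I : Ideal (ℤ√d)} {c a b : ℤ} (hc : c ≠ 0)
    (hca : ((c * a : ℤ) : ℤ√d) ∈ I) (hcb : (c : ℤ√d) * ⟨b, 1⟩ ∈ I)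
    (him : ∀ z ∈ I, c ∣ z.im) (hre : ∀ n : ℤ, (n : ℤ√d) ∈ I → c * a ∣ n) :
    a ∣ d - b ^ 2 ∧ I = Ideal.span {(c : ℤ√d)} * primitiveIdeal d a b := by
  refine ⟨(mul_dvd_mul_iff_left hc).mp (hre _ ?_), _root_.le_antisymm (fun z hz => ?_) ?_⟩
  · have h : ((c * (d - b ^ 2) : ℤ) : ℤ√d) = (c : ℤ√d) * ⟨b, 1⟩ * ⟨-b, 1⟩ := by
      ext
      · simp only [re_mul, im_mul, re_intCast, im_intCast]
        ring
      · simp [sq]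
    rw [h]
    exact I.mul_mem_right _ hcb
  · obtain ⟨t, ht⟩ := him z hz
    obtain ⟨s, hs⟩ := hre (z.re - t * c * b) <| by
      have h : ((z.re - t * c * b : ℤ) : ℤ√d) = z - t * ((c : ℤ√d) * ⟨b, 1⟩) := by
        ext
        · simp [mul_assoc]
        · simp only [re_mul, im_sub, im_mul, re_intCast, im_intCast]
          linear_combination -ht
      rw [h]
      exact I.sub_mem hz (I.mul_mem_left _ hcb)
    have h : z = c * (s * a + t * ⟨b, 1⟩) := by
      ext
      · simp only [re_add, re_mul, re_intCast, im_intCast]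
        linear_combination hs
      · simp only [im_add, im_mul, re_intCast, im_intCast]
        linear_combination ht
    rw [h]
    exact Ideal.mul_mem_mul (Ideal.mem_span_singleton_self _) (Ideal.add_mem _
      (Ideal.mul_mem_left _ _ (intCast_mem_primitiveIdeal a b))
      (Ideal.mul_mem_left _ _ (mk_mem_primitiveIdeal a b)))
  · rw [Ideal.span_singleton_mul_le_iff]
    intro z hz
    obtain ⟨α, β, rfl⟩ := Ideal.mem_span_pair.mp hz
    rw [mul_add, mul_left_comm, mul_left_comm (c : ℤ√d), ← Int.cast_mul]
    exact I.add_mem (I.mul_mem_left _ hca) (I.mul_mem_left _ hcb)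

theorem exists_eq_span_mul_primitiveIdeal (hd : ∀ n : ℤ, d ≠ n * n) {I : Ideal (ℤ√d)}
    (hI : I ≠ ⊥) : ∃ c a b : ℤ, c ≠ 0 ∧ a ∣ d - b ^ 2 ∧
      I = Ideal.span {(c : ℤ√d)} * primitiveIdeal d a b := by
  obtain ⟨α, hα⟩ := Submodule.IsPrincipal.principal (I.comap (Int.castRingHom (ℤ√d)))
  obtain ⟨c, hc⟩ := Submodule.IsPrincipal.principal (imIdeal I)
  have hre (n : ℤ) : (n : ℤ√d) ∈ I ↔ α ∣ n := by
    rw [← Ideal.mem_span_singleton, ← Ideal.submodule_span_eq, ← hα, Ideal.mem_comap, eq_intCast]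
  have him (z : ℤ√d) (hz : z ∈ I) : c ∣ z.im := by
    rw [← Ideal.mem_span_singleton, ← Ideal.submodule_span_eq, ← hc, mem_imIdeal]
    exact ⟨z, hz, rfl⟩
  obtain ⟨z₀, hz₀, hz₀c⟩ : ∃ z ∈ I, z.im = c :=
    mem_imIdeal.mp (hc ▸ Submodule.mem_span_singleton_self c)
  obtain ⟨n, hn0, hn⟩ := exists_intCast_mem_ne_zero hd hI
  obtain ⟨a, rfl⟩ : c ∣ α := by simpa using him _ (I.mul_mem_left sqrtd ((hre α).mpr dvd_rfl))
  obtain ⟨b, hb⟩ : c ∣ z₀.re := by simpa using him _ (I.mul_mem_left sqrtd hz₀)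
  have hc0 : c ≠ 0 := by
    rintro rfl
    exact hn0 (by simpa using (hre n).mp hn)
  have hcb : (c : ℤ√d) * ⟨b, 1⟩ = z₀ := by ext <;> simp [hb, hz₀c]
  refine ⟨c, a, b, hc0, eq_span_mul_primitiveIdeal hc0 ((hre _).mpr dvd_rfl) (hcb ▸ hz₀) him
    fun n hn => (hre n).mp hn⟩

theorem le_primitiveIdeal_two_one (hd : Odd d) {J : Ideal (ℤ√d)}
    (hW : primitiveIdeal d 8 1 ≤ J) (hJ : J ≠ ⊤) : J ≤ primitiveIdeal d 2 1 := by
  intro z hz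
  rw [mem_primitiveIdeal (two_dvd_sub_one_sq hd), one_mul]
  by_contra hodd
  obtain ⟨m, hm⟩ : ∃ m, z.re - z.im = 2 * m + 1 := ⟨(z.re - z.im) / 2, by omega⟩
  obtain ⟨k, hk⟩ := Int.even_mul_succ_self m
  have hn : ((2 * m + 1 : ℤ) : ℤ√d) ∈ J := by
    have h : ((2 * m + 1 : ℤ) : ℤ√d) = z - z.im * ⟨1, 1⟩ := by
      ext
      · simp only [re_sub, re_mul, re_intCast, im_intCast]
        linear_combination -hm
      · simp
    rw [h]
    exact J.sub_mem hz (J.mul_mem_left _ (hW (mk_mem_primitiveIdeal 8 1)))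
  -- `(2m + 1)² = 8k + 1`
  have h1 : (1 : ℤ√d) = (2 * m + 1 : ℤ) * ((2 * m + 1 : ℤ) : ℤ√d) - k * (8 : ℤ) := by
    rw [← Int.cast_mul, ← Int.cast_mul, ← Int.cast_sub, ← Int.cast_one]
    congr 1
    linear_combination -4 * hk
  exact hJ ((Ideal.eq_top_iff_one J).mpr (h1 ▸ J.sub_mem (J.mul_mem_left _ hn)
    (J.mul_mem_left _ (hW (intCast_mem_primitiveIdeal 8 1)))))

theorem not_isTAFRing_of_emod_eight_eq_one (hd : d % 8 = 1) : ¬IsTAFRing (ℤ√d) := by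
  intro hR
  have h81 : (8 : ℤ) ∣ d - 1 ^ 2 := by rw [one_pow]; omega
  have hW : primitiveIdeal d 8 1 ≠ ⊤ :=
    (primitiveIdeal_eq_top_iff h81).not.mpr (by norm_num [Int.isUnit_iff])
  have hodd : Odd d := Int.odd_iff.mpr (by omega)
  have hWM : ¬primitiveIdeal d 8 1 ≤ primitiveIdeal d 2 1 ^ 2 := fun h => by
    have h11 := primitiveIdeal_two_one_sq_le hodd (h (mk_mem_primitiveIdeal 8 1))
    rw [mem_span_intCast] at h11
    norm_num at h11
  have h2 := hR.isTwoAbsorbing_of_forall_le hW (fun J => le_primitiveIdeal_two_one hodd) hWM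
  have h8 : ((2 : ℤ) : ℤ√d) * (2 : ℤ) * (2 : ℤ) ∈ primitiveIdeal d 8 1 := by
    rw [← Int.cast_mul, ← Int.cast_mul]
    exact intCast_mem_primitiveIdeal 8 1
  have h4 : ((2 : ℤ) : ℤ√d) * (2 : ℤ) ∉ primitiveIdeal d 8 1 := by
    rw [← Int.cast_mul, mem_primitiveIdeal h81]
    norm_num
  rcases h2 _ _ _ h8 with h | h | h <;> exact h4 h

theorem isTAFRing_of_emod_eight_eq_five (hsf : Squarefree d) (hd : d % 8 = 5) :
    IsTAFRing (ℤ√d) := by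
  have hd' := hsf.ne_mul_self (by rw [Int.isUnit_iff]; omega)
  have := isDomain_of_ne_mul_self hd'
  refine isTAFRing_of_forall_mem fun I _ => ?_
  rcases eq_or_ne I ⊥ with rfl | hI
  · exact Ideal.isPrime_bot.mem_twoAbsorbingProducts
  obtain ⟨c, a, b, hc, hab, rfl⟩ := exists_eq_span_mul_primitiveIdeal hd' hI
  exact mul_mem (span_intCast_mem_twoAbsorbingProducts hsf (Int.odd_iff.mpr (by omega)) hc)
    (primitiveIdeal_mem_twoAbsorbingProducts hsf hd hab)

end Zsqrtd

theorem Zsqrtd_TAF_iff_general (d : ℤ) (hsf : Squarefree d)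
    (h4 : d % 4 = 1) : IsTAFRing (Zsqrtd d) ↔ d % 8 = 5 := by
  refine ⟨fun hR => ?_, Zsqrtd.isTAFRing_of_emod_eight_eq_five hsf⟩
  by_contra h5
  exact Zsqrtd.not_isTAFRing_of_emod_eight_eq_one (by omega) hR

theorem Zsqrtd_TAF_iff (d : ℤ) (hsf : Squarefree d) (h0 : d ≠ 0) (h1 : d ≠ 1)
    (h4 : d % 4 = 1) : IsTAFRing (Zsqrtd d) ↔ d % 8 = 5 :=
  Zsqrtd_TAF_iff_general d hsf h4
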